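/- Let V be a real vector space and W an ordered vector space with the interpolation property, and let p : V → W be sublinear. Then for every v ∈ V, p(v) = max { φ(v) : φ : V → W linear, φ ≤ p pointwise }, i.e., there exists a linear φ ≤ p with φ(v) = p(v), and every linear φ ≤ p satisfies φ(v) ≤ p(v). -/

import Mathlib

/-!
Hahn–Banach–Kantorovich by Zorn's lemma. The map `r • v ↦ r • p v` on the line through `v` is
dominated by `p`. A dominated partial linear map `f` extends to `y ∉ dom f` by choosing its
value `c` at `y` with `f x - p (x - y) ≤ c ≤ p (x' + y) - f x'` for all `x, x' ∈ dom f`; such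
a `c` exists by the interpolation property, because
`f x + f x' ≤ p (x + x') ≤ p (x - y) + p (x' + y)`.
A maximal dominated extension is therefore defined everywhere.
-/

open Submodule

def HasInterpolation (W : Type*) [LE W] : Prop :=
  ∀ A B : Set W, A.Nonempty → B.Nonempty →
    (∀ a ∈ A, ∀ b ∈ B, a ≤ b) → ∃ w : W, (∀ a ∈ A, a ≤ w) ∧ ∀ b ∈ B, w ≤ b

section HahnBanachKantorovich

variable {V W : Type*} [AddCommGroup V] [Module ℝ V]
  [AddCommGroup W] [PartialOrder W] [Module ℝ W]

structure IsSublinear (p : V → W) : Prop where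
  map_smul_of_nonneg : ∀ c : ℝ, 0 ≤ c → ∀ v : V, p (c • v) = c • p v
  map_add_le : ∀ v₁ v₂ : V, p (v₁ + v₂) ≤ p v₁ + p v₂

def LinearPMap.DominatedBy (f : V →ₗ.[ℝ] W) (p : V → W) : Prop :=
  ∀ x : f.domain, f x ≤ p x

namespace IsSublinear

variable {p : V → W}

theorem map_zero (hp : IsSublinear p) : p 0 = 0 := by
  simpa using hp.map_smul_of_nonneg 0 le_rfl 0

theorem neg_map_neg_le [IsOrderedAddMonoid W] (hp : IsSublinear p) (v : V) :
    -p (-v) ≤ p v := by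
  rw [neg_le_iff_add_nonneg', ← hp.map_zero, ← neg_add_cancel v]
  exact hp.map_add_le _ _

theorem smul_map_le [IsOrderedAddMonoid W] (hp : IsSublinear p) (r : ℝ) (v : V) :
    r • p v ≤ p (r • v) := by
  rcases le_or_gt 0 r with hr | hr
  · exact (hp.map_smul_of_nonneg r hr v).ge
  · calc r • p v = -p ((-r) • v) := by
          rw [hp.map_smul_of_nonneg _ (neg_nonneg.2 hr.le), neg_smul, neg_neg]
      _ = -p (-(r • v)) := by rw [neg_smul]
      _ ≤ p (r • v) := hp.neg_map_neg_le _

theorem exists_dominatedBy_apply_eq [IsOrderedAddMonoid W] (hp : IsSublinear p) (v : V) :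
    ∃ f : V →ₗ.[ℝ] W, f.DominatedBy p ∧ ∃ hv : v ∈ f.domain, f ⟨v, hv⟩ = p v := by
  have hker : ∀ r : ℝ, r • v = 0 → r • p v = 0 := by
    intro r hr
    rcases smul_eq_zero.1 hr with rfl | rfl
    · exact zero_smul ℝ _
    · rw [hp.map_zero, smul_zero]
  refine ⟨LinearPMap.mkSpanSingleton' v (p v) hker, ?_, mem_span_singleton_self v,
    LinearPMap.mkSpanSingleton'_apply_self _ _ _ _⟩
  rintro ⟨_, hz⟩
  obtain ⟨r, rfl⟩ := mem_span_singleton.1 hz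
  rw [LinearPMap.mkSpanSingleton'_apply]
  exact hp.smul_map_le r v

end IsSublinear

namespace LinearPMap.DominatedBy

variable {p : V → W} {f : V →ₗ.[ℝ] W}

theorem exists_bounds_of_hasInterpolation [IsOrderedAddMonoid W] (hW : HasInterpolation W)
    (hp : IsSublinear p) (hf : f.DominatedBy p) (y : V) :
    ∃ c : W, (∀ x : f.domain, f x + c ≤ p (x + y)) ∧ ∀ x : f.domain, f x - c ≤ p (x - y) := by
  have hAB : ∀ a ∈ Set.range fun x : f.domain => f x - p (x - y),
      ∀ b ∈ Set.range fun x : f.domain => p (x + y) - f x, a ≤ b := by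
    rintro _ ⟨x, rfl⟩ _ ⟨x', rfl⟩
    rw [sub_le_sub_iff]
    calc f x + f x' = f (x + x') := (f.map_add x x').symm
      _ ≤ p (x + x') := hf (x + x')
      _ = p ((x - y) + (x' + y)) := by rw [sub_add_add_cancel]
      _ ≤ p (x' + y) + p (x - y) := (hp.map_add_le _ _).trans_eq (add_comm _ _)
  obtain ⟨c, hlow, hup⟩ := hW _ _ (Set.range_nonempty _) (Set.range_nonempty _) hAB
  exact ⟨c, fun x => le_sub_iff_add_le'.1 (hup _ ⟨x, rfl⟩),
    fun x => sub_le_comm.1 (hlow _ ⟨x, rfl⟩)⟩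

theorem add_smul_le_of_add_le [PosSMulMono ℝ W] (hp : IsSublinear p) {y : V} {c : W}
    (h : ∀ x : f.domain, f x + c ≤ p (x + y)) (x : f.domain) {t : ℝ} (ht : 0 < t) :
    f x + t • c ≤ p (x + t • y) := by
  have hx : t • (t⁻¹ • x) = x := smul_inv_smul₀ ht.ne' x
  calc f x + t • c = t • (f (t⁻¹ • x) + c) := by rw [smul_add, ← f.map_smul, hx]
    _ ≤ t • p ((t⁻¹ • x : f.domain) + y) := smul_le_smul_of_nonneg_left (h _) ht.le
    _ = p (x + t • y) := by
      rw [← hp.map_smul_of_nonneg t ht.le, smul_add]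
      exact congrArg (fun z : f.domain => p (z + t • y)) hx

theorem supSpanSingleton [IsOrderedAddMonoid W] [PosSMulMono ℝ W] (hp : IsSublinear p)
    (hf : f.DominatedBy p) {y : V} (hy : y ∉ f.domain) {c : W}
    (hc_add : ∀ x : f.domain, f x + c ≤ p (x + y))
    (hc_sub : ∀ x : f.domain, f x - c ≤ p (x - y)) :
    (f.supSpanSingleton y c hy).DominatedBy p := by
  rintro ⟨z, hz⟩
  obtain ⟨x, hx, _, hy', rfl⟩ := mem_sup.1 hz
  obtain ⟨r, rfl⟩ := mem_span_singleton.1 hy'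
  rw [LinearPMap.supSpanSingleton_apply_mk _ _ _ _ _ hx]
  rcases lt_trichotomy r 0 with hr | rfl | hr
  · have hc_neg : ∀ x : f.domain, f x + -c ≤ p (x + -y) := fun x => by
      simpa only [← sub_eq_add_neg] using hc_sub x
    simpa only [neg_smul_neg, RingHom.id_apply] using
      add_smul_le_of_add_le hp hc_neg ⟨x, hx⟩ (neg_pos.2 hr)
  · simpa using hf ⟨x, hx⟩
  · exact add_smul_le_of_add_le hp hc_add ⟨x, hx⟩ hr

theorem exists_gt [IsOrderedAddMonoid W] [PosSMulMono ℝ W] (hW : HasInterpolation W)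
    (hp : IsSublinear p) (hf : f.DominatedBy p) (hdom : f.domain ≠ ⊤) :
    ∃ g : V →ₗ.[ℝ] W, g.DominatedBy p ∧ f < g := by
  obtain ⟨y, hy⟩ : ∃ y, y ∉ f.domain := by
    by_contra! h
    exact hdom (eq_top_iff.2 fun y _ => h y)
  obtain ⟨c, hc_add, hc_sub⟩ := hf.exists_bounds_of_hasInterpolation hW hp y
  refine ⟨f.supSpanSingleton y c hy, hf.supSpanSingleton hp hy hc_add hc_sub,
    lt_of_le_of_ne (f.left_le_sup _ _) fun h => hy ?_⟩
  rw [h, LinearPMap.domain_supSpanSingleton]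
  exact mem_sup_right (mem_span_singleton_self y)

theorem sSup {c : Set (V →ₗ.[ℝ] W)} (hc : DirectedOn (· ≤ ·) c) (hne : c.Nonempty)
    (h : ∀ f ∈ c, f.DominatedBy p) : (LinearPMap.sSup c hc).DominatedBy p := by
  rintro ⟨x, hx⟩
  obtain ⟨f, hfc, hxf⟩ := (LinearPMap.mem_domain_sSup_iff hne hc).1 hx
  rw [LinearPMap.sSup_apply hc hfc ⟨x, hxf⟩]
  exact h f hfc ⟨x, hxf⟩

theorem exists_linearMap_extension [IsOrderedAddMonoid W] [PosSMulMono ℝ W]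
    (hW : HasInterpolation W) (hp : IsSublinear p) (hf : f.DominatedBy p) :
    ∃ g : V →ₗ[ℝ] W, (∀ x, g x ≤ p x) ∧ ∀ x : f.domain, g x = f x := by
  obtain ⟨g, hfg, hg⟩ := zorn_le_nonempty₀ {g : V →ₗ.[ℝ] W | g.DominatedBy p}
    (fun c hcS hchain y hy => ⟨_, sSup hchain.directedOn ⟨y, hy⟩ hcS,
      fun _ => LinearPMap.le_sSup hchain.directedOn⟩) f hf
  have htop : g.domain = ⊤ := by
    by_contra hdom
    obtain ⟨g', hg', hlt⟩ := hg.prop.exists_gt hW hp hdom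
    exact hg.not_gt hg' hlt
  exact ⟨g.toFun ∘ₗ (LinearEquiv.ofTop _ htop).symm.toLinearMap, fun _ => hg.prop _,
    fun _ => (hfg.2 rfl).symm⟩

end LinearPMap.DominatedBy

end HahnBanachKantorovich

/-- if `W` has the interpolation property and `p : V → W` is sublinear, then
`p(v)` is the maximum of `φ(v)` over all linear `φ ≤ p`: every linear `φ ≤ p` satisfies
`φ(v) ≤ p(v)`, and some linear `φ ≤ p` attains `φ(v) = p(v)`. -/
theorem sublinear_is_max_of_linear {V W : Type*}
    [AddCommGroup V] [Module ℝ V]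
    [AddCommGroup W] [PartialOrder W] [IsOrderedAddMonoid W] [Module ℝ W] [PosSMulMono ℝ W]
    (hinterp : ∀ A B : Set W, A.Nonempty → B.Nonempty →
      (∀ a ∈ A, ∀ b ∈ B, a ≤ b) → ∃ w : W, (∀ a ∈ A, a ≤ w) ∧ ∀ b ∈ B, w ≤ b)
    (p : V → W)
    (hp_hom : ∀ c : ℝ, 0 ≤ c → ∀ v : V, p (c • v) = c • p v)
    (hp_add : ∀ v₁ v₂ : V, p (v₁ + v₂) ≤ p v₁ + p v₂) :
    ∀ v : V, (∀ φ : V →ₗ[ℝ] W, (∀ w : V, φ w ≤ p w) → φ v ≤ p v) ∧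
      ∃ φ : V →ₗ[ℝ] W, (∀ w : V, φ w ≤ p w) ∧ φ v = p v := by
  have hp : IsSublinear p := ⟨hp_hom, hp_add⟩
  intro v
  refine ⟨fun φ hφ => hφ v, ?_⟩
  obtain ⟨f, hf, hv, hfv⟩ := hp.exists_dominatedBy_apply_eq v
  obtain ⟨φ, hφp, hφf⟩ := hf.exists_linearMap_extension hinterp hp
  exact ⟨φ, hφp, (hφf ⟨v, hv⟩).trans hfv⟩
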